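/- arXiv:1602.06173 — 2 statements merged into one kernel-verified Lean document; each statement's English description precedes it below -/
import Mathlib

section
/- The set (0, 1/(q_G²(q_G² − 1))) ∪ ∪_{k=0}^{2} ( q_KL^{1−k}/(q_KL² − 1), q_G^{1−k}/(q_G² − 1) ) is contained in (∪_{n=2}^∞ D_n) ∩ (0, 1). (Here q^{1−k}/(q² − 1) is the value ((0^k(10)^∞))_q and 1/(q_G²(q_G² − 1)) is the value ((0^3(10)^∞))_{q_G}.) -/
open Filter Topology

noncomputable section

/-- The value `Σ_{i≥0} d i / q^(i+1)` of a (0-indexed) digit sequence `d` in base `q`;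
this corresponds to `((d_i)_{i≥1})_q` with `d_i = d (i-1)`. -/
def seqVal (q : ℝ) (d : ℕ → ℕ) : ℝ := ∑' i : ℕ, (d i : ℝ) / q ^ (i + 1)

/-- `d` is a `q`-expansion of `x` with digits in `{0,1}`. -/
def IsExpansion (q x : ℝ) (d : ℕ → ℕ) : Prop :=
  (∀ i, d i ≤ 1) ∧ x = seqVal q d

/-- `x` has a unique `q`-expansion. -/
def HasUniqueExpansion (q x : ℝ) : Prop := ∃! d : ℕ → ℕ, IsExpansion q x d

/-- The set `U(x)` of univoque bases of `x`. -/
def UBases (x : ℝ) : Set ℝ := {q | 1 < q ∧ q < 2 ∧ HasUniqueExpansion q x}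

/-- `q_s(x) = inf U(x)`. -/
def qs (x : ℝ) : ℝ := sInf (UBases x)

/-- The univoque set `U_q` of `x ∈ [0, 1/(q-1)]` with a unique `q`-expansion. -/
def Uset (q : ℝ) : Set ℝ :=
  {x | x ∈ Set.Icc 0 (1 / (q - 1)) ∧ HasUniqueExpansion q x}

/-- The set `U_q'` of digit sequences which are the unique `q`-expansion of their value. -/
def USeq (q : ℝ) : Set (ℕ → ℕ) :=
  {d | (∀ i, d i ≤ 1) ∧ ∀ e : ℕ → ℕ, IsExpansion q (seqVal q d) e → e = d}

/-- The Thue–Morse sequence: `τ 0 = 0`, `τ (2n) = τ n`, `τ (2n+1) = 1 - τ n`. -/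
def IsThueMorse (τ : ℕ → ℕ) : Prop :=
  τ 0 = 0 ∧ (∀ n, τ (2 * n) = τ n) ∧ ∀ n, τ (2 * n + 1) = 1 - τ n

/-- `q` is the Komornik–Loreti constant: the base in `(1,2)` with `1 = Σ_{i≥1} τ_i q^{-i}`. -/
def IsKL (τ : ℕ → ℕ) (q : ℝ) : Prop :=
  1 < q ∧ q < 2 ∧ (1 : ℝ) = ∑' i : ℕ, (τ (i + 1) : ℝ) / q ^ (i + 1)

/-- `Q` is the sequence of bases `q_n`: `Q 0 = 1` and for `n ≥ 1`, `Q n` is the root in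
`(1,2)` of `1 = Σ_{i=1}^{2^n} τ_i q^{-i}`. -/
def IsBaseSeq (τ : ℕ → ℕ) (Q : ℕ → ℝ) : Prop :=
  Q 0 = 1 ∧ ∀ n, 1 ≤ n → 1 < Q n ∧ Q n < 2 ∧
    (1 : ℝ) = ∑ i ∈ Finset.range (2 ^ n), (τ (i + 1) : ℝ) / (Q n) ^ (i + 1)

/-- `D_n = ⋃_{q ∈ (q_{n-1}, q_n]} U_q`. -/
def D (Q : ℕ → ℝ) (n : ℕ) : Set ℝ := ⋃ q ∈ Set.Ioc (Q (n - 1)) (Q n), Uset q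

/-- The golden ratio. -/
def qG : ℝ := (1 + Real.sqrt 5) / 2

/-- Strict lexicographical order on digit sequences. -/
def seqLt (c d : ℕ → ℕ) : Prop := ∃ n, (∀ i, i < n → c i = d i) ∧ c n < d n

/-- The word `τ_1 ⋯ τ_m`. -/
def tmPrefix (τ : ℕ → ℕ) (m : ℕ) : List ℕ := (List.range m).map fun i => τ (i + 1)

/-- `w⁻`: decrease the last digit of a word by 1. -/
def lastDec (w : List ℕ) : List ℕ := w.dropLast ++ [w.getLastD 0 - 1]

/-- `w⁺`: increase the last digit of a word by 1. -/
def lastInc (w : List ℕ) : List ℕ := w.dropLast ++ [w.getLastD 0 + 1]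

/-- The reflection of a word. -/
def reflect (w : List ℕ) : List ℕ := w.map fun d => 1 - d

/-- The infinite sequence given by the prefix `p` followed by periodic repetition of `w`. -/
def prefPeriodic (p w : List ℕ) : ℕ → ℕ := fun j =>
  if j < p.length then p.getD j 0 else w.getD ((j - p.length) % w.length) 0

/-- `z_n = ((τ_1⋯τ_{2^{n-1}})(τ_{2^{n-1}+1}⋯τ_{2^n})^∞)_{q_n}`. -/
def zVal (τ : ℕ → ℕ) (Q : ℕ → ℝ) (n : ℕ) : ℝ :=
  seqVal (Q n) (prefPeriodic (tmPrefix τ (2 ^ (n - 1)))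
    ((List.range (2 ^ (n - 1))).map fun i => τ (2 ^ (n - 1) + (i + 1))))

/-- `z_{1,k} = Σ_{i=1}^k q_G^{-i} + 1/(q_G^k (q_G^2 - 1))`. -/
def z1 (k : ℕ) : ℝ :=
  (∑ i ∈ Finset.range k, 1 / qG ^ (i + 1)) + 1 / (qG ^ k * (qG ^ 2 - 1))

/-!
Above the golden ratio `φ = q_G`, the sequence `0^k (10)^∞` is the unique expansion of its value
`altVal q k = q^(1-k) / (q^2 - 1)`: the value fixes the first digit (this is `q^2 > q + 1`), and
the tail is again of the same form. Each base `q ∈ (q_G, q_KL)` lies in some `(q_{n-1}, q_n]`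
with `n ≥ 2`, since `q_1 = q_G` and some partial sum of length `2^m` of the Thue–Morse series
exceeds `1` at `q`. By the intermediate value theorem every point of
`(altVal q_KL k, altVal q_G k)` is such a value `altVal q k`, and for `k ≥ 3` these intervals
accumulate at `0` and overlap (because `q_KL > 1.78`, already visible on eight terms of the
series), so they cover `(0, altVal q_G 3)`.
-/

open Set Real
open scoped goldenRatio

section SeqVal

variable {q : ℝ}

lemma hasSum_one_div_pow_succ (hq : 1 < q) :
    HasSum (fun i : ℕ => 1 / q ^ (i + 1)) (1 / (q - 1)) := by
  have hq0 : 0 < q := zero_lt_one.trans hq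
  have hgeom := (hasSum_geometric_of_lt_one (inv_nonneg.2 hq0.le)
    (inv_lt_one_of_one_lt₀ hq)).mul_left q⁻¹
  have hf : (fun i : ℕ => 1 / q ^ (i + 1)) = fun i => q⁻¹ * q⁻¹ ^ i := by
    ext i; rw [pow_succ', one_div, mul_inv, inv_pow]
  have ha : 1 / (q - 1) = q⁻¹ * (1 - q⁻¹)⁻¹ := by
    have : q - 1 ≠ 0 := by linarith
    field_simp
  rw [hf, ha]
  exact hgeom

lemma summable_digits_div_pow (hq : 1 < q) {c : ℕ → ℕ} (hc : ∀ i, c i ≤ 1) :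
    Summable (fun i : ℕ => (c i : ℝ) / q ^ (i + 1)) :=
  (hasSum_one_div_pow_succ hq).summable.of_nonneg_of_le (fun _ => by positivity)
    fun i => by gcongr; exact_mod_cast hc i

lemma seqVal_nonneg (hq : 0 < q) (c : ℕ → ℕ) : 0 ≤ seqVal q c :=
  tsum_nonneg fun _ => by positivity

lemma seqVal_le (hq : 1 < q) {c : ℕ → ℕ} (hc : ∀ i, c i ≤ 1) : seqVal q c ≤ 1 / (q - 1) :=
  hasSum_le (fun i => by gcongr; exact_mod_cast hc i)
    (summable_digits_div_pow hq hc).hasSum (hasSum_one_div_pow_succ hq)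

lemma seqVal_eq_head_add_tail (hq : 1 < q) {c : ℕ → ℕ} (hc : ∀ i, c i ≤ 1) :
    seqVal q c = (c 0 + seqVal q (fun i => c (i + 1))) / q := by
  rw [seqVal, (summable_digits_div_pow hq hc).tsum_eq_zero_add, seqVal, add_div,
    ← tsum_div_const]
  congr 1
  · simp
  · congr 1 with i
    rw [pow_succ _ (i + 1), div_div]

lemma seqVal_le_of_head_eq_zero (hq : 1 < q) {c : ℕ → ℕ} (hc : ∀ i, c i ≤ 1) (h0 : c 0 = 0) :
    seqVal q c ≤ 1 / (q - 1) / q := by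
  rw [seqVal_eq_head_add_tail hq hc, h0, Nat.cast_zero, zero_add]
  gcongr
  exact seqVal_le hq fun i => hc (i + 1)

lemma one_div_le_seqVal_of_head_eq_one (hq : 1 < q) {c : ℕ → ℕ} (hc : ∀ i, c i ≤ 1)
    (h1 : c 0 = 1) : 1 / q ≤ seqVal q c := by
  rw [seqVal_eq_head_add_tail hq hc, h1, Nat.cast_one]
  have := seqVal_nonneg (zero_lt_one.trans hq) fun i => c (i + 1)
  gcongr
  linarith

lemma subset_USeq_of_head_eq (hq : 1 < q) {S : Set (ℕ → ℕ)}
    (hS : ∀ d ∈ S, (∀ i, d i ≤ 1) ∧ (fun i => d (i + 1)) ∈ S)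
    (hhead : ∀ d ∈ S, ∀ e : ℕ → ℕ, (∀ i, e i ≤ 1) → seqVal q e = seqVal q d → e 0 = d 0) :
    S ⊆ USeq q := by
  have key : ∀ n, ∀ d ∈ S, ∀ e : ℕ → ℕ, (∀ i, e i ≤ 1) → seqVal q e = seqVal q d →
      e n = d n := by
    intro n
    induction n with
    | zero => exact hhead
    | succ n ih =>
      intro d hd e he hv
      have h0 := hhead d hd e he hv
      refine ih _ (hS d hd).2 _ (fun i => he (i + 1)) ?_
      rw [seqVal_eq_head_add_tail hq he, seqVal_eq_head_add_tail hq (hS d hd).1, h0] at hv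
      have hq0 : q ≠ 0 := by positivity
      field_simp at hv
      linarith
  intro d hd
  exact ⟨(hS d hd).1, fun e ⟨he, hv⟩ => funext fun n => key n d hd e he hv.symm⟩

lemma seqVal_mem_Uset (hq : 1 < q) {d : ℕ → ℕ} (hd : d ∈ USeq q) : seqVal q d ∈ Uset q :=
  ⟨⟨seqVal_nonneg (zero_lt_one.trans hq) d, seqVal_le hq hd.1⟩,
    ⟨d, ⟨hd.1, rfl⟩, fun e he => hd.2 e he⟩⟩

end SeqVal

lemma qG_eq_goldenRatio : qG = φ := rfl

lemma goldenRatio_lt : φ < 81 / 50 := by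
  have h5 : √5 < 56 / 25 := by
    rw [sqrt_lt' (by norm_num)]; norm_num
  simp only [goldenRatio]
  linarith

lemma sq_sub_self_sub_one_pos {q : ℝ} (hq : φ < q) : 0 < q ^ 2 - q - 1 := by
  have hfac : q ^ 2 - q - 1 = (q - φ) * (q - ψ) := by
    linear_combination -goldenRatio_mul_goldenConj + q * goldenRatio_add_goldenConj
  rw [hfac]
  exact mul_pos (by linarith) (by linarith [goldenConj_neg, goldenRatio_pos])

/-- The digit sequence `0^k (10)^∞`. -/
def altSeq (k : ℕ) : ℕ → ℕ := fun i => if k ≤ i ∧ Even (i - k) then 1 else 0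

/-- The value `((0^k (10)^∞))_q`. -/
def altVal (q : ℝ) (k : ℕ) : ℝ := q / (q ^ k * (q ^ 2 - 1))

lemma altSeq_le_one (k i : ℕ) : altSeq k i ≤ 1 := by
  unfold altSeq; split_ifs <;> omega

lemma altSeq_zero_zero : altSeq 0 0 = 1 := rfl

lemma altSeq_succ_zero (k : ℕ) : altSeq (k + 1) 0 = 0 := by simp [altSeq]

lemma altSeq_zero_succ (i : ℕ) : altSeq 0 (i + 1) = altSeq 1 i := by
  rcases i with _ | i <;> simp [altSeq, Nat.even_add_one]

lemma altSeq_succ_succ (k i : ℕ) : altSeq (k + 1) (i + 1) = altSeq k i := by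
  simp [altSeq]

lemma altVal_succ (q : ℝ) (k : ℕ) : altVal q (k + 1) = altVal q k / q := by
  rw [altVal, altVal, pow_succ, div_div, mul_right_comm]

lemma altVal_add (q : ℝ) (m n : ℕ) : altVal q (m + n) = altVal q m / q ^ n := by
  rw [altVal, altVal, pow_add, div_div, mul_right_comm]

lemma seqVal_altSeq {q : ℝ} (hq : 1 < q) (k : ℕ) : seqVal q (altSeq k) = altVal q k := by
  have hstep : ∀ k,
      seqVal q (altSeq k) = (altSeq k 0 + seqVal q (fun i => altSeq k (i + 1))) / q :=
    fun k => seqVal_eq_head_add_tail hq (altSeq_le_one k)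
  induction k with
  | zero =>
    have h0 := hstep 0
    have h1 := hstep 1
    simp only [altSeq_zero_zero, altSeq_zero_succ, altSeq_succ_zero, altSeq_succ_succ] at h0 h1
    rw [h1] at h0
    have : q ^ 2 - 1 ≠ 0 := by nlinarith
    have : q ≠ 0 := by positivity
    rw [altVal, pow_zero, one_mul, eq_div_iff ‹q ^ 2 - 1 ≠ 0›]
    field_simp at h0
    linear_combination h0
  | succ k ih =>
    rw [hstep, altSeq_succ_zero, funext (altSeq_succ_succ k), ih, altVal_succ]
    simp

section AltVal

variable {q : ℝ}

lemma altVal_pos (hq : 1 < q) (k : ℕ) : 0 < altVal q k := by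
  have : 0 < q ^ 2 - 1 := by nlinarith
  unfold altVal; positivity

lemma altVal_le_altVal_zero (hq : 1 < q) (k : ℕ) : altVal q k ≤ altVal q 0 := by
  rw [← zero_add k, altVal_add]
  exact div_le_self (altVal_pos hq 0).le (one_le_pow₀ hq.le)

lemma altVal_zero_lt_one (hq : φ < q) : altVal q 0 < 1 := by
  have := sq_sub_self_sub_one_pos hq
  have hq1 : 1 < q := one_lt_goldenRatio.trans hq
  rw [altVal, pow_zero, one_mul, div_lt_one (by nlinarith)]
  linarith

lemma one_div_sub_one_div_self_lt_altVal_zero (hq : φ < q) : 1 / (q - 1) / q < altVal q 0 := by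
  have := sq_sub_self_sub_one_pos hq
  have hq1 : 1 < q := one_lt_goldenRatio.trans hq
  have : 0 < q - 1 := by linarith
  rw [altVal, pow_zero, one_mul, div_div, div_lt_div_iff₀ (by positivity) (by nlinarith)]
  nlinarith

lemma altVal_succ_lt_one_div (hq : φ < q) (k : ℕ) : altVal q (k + 1) < 1 / q := by
  have hq1 : 1 < q := one_lt_goldenRatio.trans hq
  rw [altVal_succ]
  gcongr
  exact (altVal_le_altVal_zero hq1 k).trans_lt (altVal_zero_lt_one hq)

lemma altSeq_mem_USeq (hq : φ < q) (k : ℕ) : altSeq k ∈ USeq q := by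
  have hq1 : 1 < q := one_lt_goldenRatio.trans hq
  refine subset_USeq_of_head_eq hq1 (S := range altSeq) ?_ ?_ ⟨k, rfl⟩
  · rintro _ ⟨k, rfl⟩
    refine ⟨altSeq_le_one k, ?_⟩
    cases k with
    | zero => exact ⟨1, funext fun i => (altSeq_zero_succ i).symm⟩
    | succ k => exact ⟨k, funext fun i => (altSeq_succ_succ k i).symm⟩
  · rintro _ ⟨k, rfl⟩ e he hv
    rw [seqVal_altSeq hq1] at hv
    cases k with
    | zero =>
      by_contra hne
      have h0 : e 0 = 0 := by have := he 0; rw [altSeq_zero_zero] at hne; omega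
      have := seqVal_le_of_head_eq_zero hq1 he h0
      linarith [one_div_sub_one_div_self_lt_altVal_zero hq]
    | succ k =>
      by_contra hne
      have h1 : e 0 = 1 := by have := he 0; rw [altSeq_succ_zero] at hne; omega
      have := one_div_le_seqVal_of_head_eq_one hq1 he h1
      linarith [altVal_succ_lt_one_div hq k]

lemma altVal_mem_Uset (hq : φ < q) (k : ℕ) : altVal q k ∈ Uset q := by
  have hq1 : 1 < q := one_lt_goldenRatio.trans hq
  rw [← seqVal_altSeq hq1]
  exact seqVal_mem_Uset hq1 (altSeq_mem_USeq hq k)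

lemma altVal_mem_Ioo (hq : φ < q) (k : ℕ) : altVal q k ∈ Ioo 0 1 := by
  have hq1 : 1 < q := one_lt_goldenRatio.trans hq
  exact ⟨altVal_pos hq1 k, (altVal_le_altVal_zero hq1 k).trans_lt (altVal_zero_lt_one hq)⟩

end AltVal

namespace IsThueMorse

variable {τ : ℕ → ℕ}

lemma le_one (hτ : IsThueMorse τ) (n : ℕ) : τ n ≤ 1 := by
  obtain ⟨h0, heven, hodd⟩ := hτ
  induction n using Nat.strong_induction_on with
  | _ n ih =>
    obtain ⟨m, rfl | rfl⟩ := Nat.even_or_odd' n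
    · rcases m.eq_zero_or_pos with rfl | hm
      · simp [h0]
      · rw [heven]; exact ih m (by omega)
    · rw [hodd]; omega

lemma first_values (hτ : IsThueMorse τ) :
    τ 1 = 1 ∧ τ 2 = 1 ∧ τ 3 = 0 ∧ τ 4 = 1 ∧ τ 5 = 0 ∧ τ 6 = 0 ∧ τ 7 = 1 ∧ τ 8 = 1 := by
  obtain ⟨h0, heven, hodd⟩ := hτ
  have t1 := hodd 0; have t2 := heven 1; have t3 := hodd 1; have t4 := heven 2
  have t5 := hodd 2; have t6 := heven 3; have t7 := hodd 3; have t8 := heven 4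
  norm_num at t1 t2 t3 t4 t5 t6 t7 t8
  omega

end IsThueMorse

lemma IsKL.eightyNine_div_fifty_lt {τ : ℕ → ℕ} {qKL : ℝ} (hτ : IsThueMorse τ) (hKL : IsKL τ qKL) :
    89 / 50 < qKL := by
  obtain ⟨h1, -, hsum⟩ := hKL
  by_contra! hle
  have hpart : ∑ i ∈ Finset.range 8, (τ (i + 1) : ℝ) / qKL ^ (i + 1) ≤ 1 :=
    hsum ▸ (summable_digits_div_pow h1 fun i => hτ.le_one (i + 1)).sum_le_tsum _
      fun _ _ => by positivity
  have hmono : ∑ i ∈ Finset.range 8, (τ (i + 1) : ℝ) / (89 / 50) ^ (i + 1) ≤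
      ∑ i ∈ Finset.range 8, (τ (i + 1) : ℝ) / qKL ^ (i + 1) :=
    Finset.sum_le_sum fun i _ => by gcongr
  obtain ⟨t1, t2, t3, t4, t5, t6, t7, t8⟩ := hτ.first_values
  have := hmono.trans hpart
  simp only [Finset.sum_range_succ, Finset.sum_range_zero, t1, t2, t3, t4, t5, t6, t7, t8] at this
  norm_num at this

namespace IsBaseSeq

variable {τ : ℕ → ℕ} {Q : ℕ → ℝ}

lemma apply_one (hτ : IsThueMorse τ) (hQ : IsBaseSeq τ Q) : Q 1 = φ := by
  obtain ⟨h1, -, hsum⟩ := hQ.2 1 le_rfl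
  obtain ⟨t1, t2, -⟩ := hτ.first_values
  norm_num [Finset.sum_range_succ, t1, t2] at hsum
  have hsq : Q 1 ^ 2 = Q 1 + 1 := by
    have : Q 1 ≠ 0 := by positivity
    field_simp at hsum
    exact hsum
  have hfac : (Q 1 - φ) * (Q 1 - ψ) = 0 := by
    linear_combination hsq + goldenRatio_mul_goldenConj - Q 1 * goldenRatio_add_goldenConj
  rcases mul_eq_zero.1 hfac with h | h
  · linarith
  · linarith [goldenConj_neg]

lemma exists_le (hτ : IsThueMorse τ) {qKL : ℝ} (hKL : IsKL τ qKL) (hQ : IsBaseSeq τ Q)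
    {q : ℝ} (hq : 1 < q) (hqKL : q < qKL) : ∃ m, 1 ≤ m ∧ q ≤ Q m := by
  have hdig : ∀ i, τ (i + 1) ≤ 1 := fun i => hτ.le_one (i + 1)
  have hgt : 1 < ∑' i : ℕ, (τ (i + 1) : ℝ) / q ^ (i + 1) := by
    rw [hKL.2.2]
    refine Summable.tsum_lt_tsum (i := 0) (fun i => by gcongr) ?_
      (summable_digits_div_pow hKL.1 hdig) (summable_digits_div_pow hq hdig)
    simp only [hτ.first_values.1]
    gcongr
  obtain ⟨N, hN⟩ := ((summable_digits_div_pow hq hdig).hasSum.tendsto_sum_nat.eventually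
    (eventually_gt_nhds hgt)).exists
  refine ⟨N + 1, by omega, ?_⟩
  by_contra! hlt
  obtain ⟨hQ1, -, hsum⟩ := hQ.2 (N + 1) (by omega)
  have hlong : ∑ i ∈ Finset.range N, (τ (i + 1) : ℝ) / q ^ (i + 1) ≤
      ∑ i ∈ Finset.range (2 ^ (N + 1)), (τ (i + 1) : ℝ) / q ^ (i + 1) :=
    Finset.sum_le_sum_of_subset_of_nonneg
      (Finset.range_subset_range.2
        (Nat.lt_two_pow_self.le.trans (Nat.pow_le_pow_right two_pos N.le_succ)))
      fun _ _ _ => by positivity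
  have hmono : ∑ i ∈ Finset.range (2 ^ (N + 1)), (τ (i + 1) : ℝ) / q ^ (i + 1) ≤
      ∑ i ∈ Finset.range (2 ^ (N + 1)), (τ (i + 1) : ℝ) / Q (N + 1) ^ (i + 1) :=
    Finset.sum_le_sum fun i _ => by gcongr
  linarith

end IsBaseSeq

lemma exists_lt_and_mem_Ioc {α : Type*} [LinearOrder α] {f : ℕ → α} {a m : ℕ} {x : α}
    (ha : f a < x) (hm : x ≤ f m) (ham : a ≤ m) : ∃ n, a < n ∧ x ∈ Ioc (f (n - 1)) (f n) := by
  classical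
  have hex : ∃ n, a ≤ n ∧ x ≤ f n := ⟨m, ham, hm⟩
  obtain ⟨han, hxn⟩ := Nat.find_spec hex
  have hlt : a < Nat.find hex := han.lt_of_ne fun h => (h ▸ ha).not_ge hxn
  refine ⟨Nat.find hex, hlt, ?_, hxn⟩
  have hmin := Nat.find_min hex (Nat.sub_one_lt_of_lt hlt)
  push Not at hmin
  exact hmin (by omega)

lemma Uset_subset_iUnion_D {τ : ℕ → ℕ} (hτ : IsThueMorse τ) {qKL : ℝ} (hKL : IsKL τ qKL)
    {Q : ℕ → ℝ} (hQ : IsBaseSeq τ Q) {q : ℝ} (hq : φ < q) (hqKL : q < qKL) :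
    Uset q ⊆ ⋃ n ∈ {n : ℕ | 2 ≤ n}, D Q n := by
  obtain ⟨m, hm, hqm⟩ := hQ.exists_le hτ hKL (one_lt_goldenRatio.trans hq) hqKL
  obtain ⟨n, hn, hqn⟩ := exists_lt_and_mem_Ioc (hQ.apply_one hτ ▸ hq) hqm hm
  intro x hx
  exact mem_biUnion (show 2 ≤ n from hn) (mem_biUnion hqn hx)

lemma Ioo_subset_iUnion_Ioo {α : Type*} [LinearOrder α] {c : α} {a b : ℕ → α}
    (hab : ∀ k, a k < b (k + 1)) (ha : ∀ x, c < x → ∃ k, a k < x) :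
    Ioo c (b 0) ⊆ ⋃ k, Ioo (a k) (b k) := by
  classical
  rintro x ⟨hcx, hxb⟩
  have hex := ha x hcx
  refine mem_iUnion.2 ⟨Nat.find hex, Nat.find_spec hex, ?_⟩
  rcases Nat.eq_zero_or_pos (Nat.find hex) with h | h
  · rwa [h]
  · have hmin := Nat.find_min hex (Nat.sub_one_lt_of_lt h)
    push Not at hmin
    exact hmin.trans_lt (Nat.sub_add_cancel h ▸ hab _)

lemma exists_altVal_eq {p : ℝ} (hp : φ < p) (k : ℕ) {x : ℝ}
    (hx : x ∈ Ioo (altVal p k) (altVal φ k)) : ∃ q ∈ Ioo φ p, altVal q k = x := by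
  have hcont : ContinuousOn (fun q => altVal q k) (Icc φ p) := by
    refine continuousOn_id.div (by fun_prop) fun q hq => ?_
    have : 1 < q := one_lt_goldenRatio.trans_le hq.1
    have : 0 < q ^ 2 - 1 := by nlinarith
    positivity
  exact intermediate_value_Ioo' hp.le hcont hx

lemma altVal_three_add_lt {q : ℝ} (hq : 89 / 50 < q) (j : ℕ) :
    altVal q (3 + j) < altVal φ (3 + (j + 1)) := by
  have hG1 := one_lt_goldenRatio
  have hGq : φ < q := goldenRatio_lt.trans (by linarith)
  have hbase : altVal q 3 < altVal φ 4 := by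
    have hG4 : φ ^ 4 * (φ ^ 2 - 1) = φ * (3 * φ + 2) := by
      linear_combination (φ ^ 4 + φ ^ 3 + φ ^ 2 + 2 * φ) * goldenRatio_sq
    have hq3 : 3 * φ + 2 < q ^ 2 * (q ^ 2 - 1) := by
      have : (89 / 50 : ℝ) ^ 2 < q ^ 2 := by gcongr
      nlinarith [goldenRatio_lt]
    have : 0 < q ^ 2 - 1 := by nlinarith
    rw [altVal, altVal, hG4, div_lt_div_iff₀ (by positivity) (by positivity)]
    calc q * (φ * (3 * φ + 2)) < q * (φ * (q ^ 2 * (q ^ 2 - 1))) := by gcongr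
      _ = φ * (q ^ 3 * (q ^ 2 - 1)) := by ring
  rw [show 3 + (j + 1) = 4 + j by omega, altVal_add, altVal_add]
  calc altVal q 3 / q ^ j < altVal φ 4 / q ^ j := by gcongr
    _ ≤ altVal φ 4 / φ ^ j := by
      have := altVal_pos hG1 4
      gcongr

lemma exists_altVal_three_add_lt {q : ℝ} (hq : 1 < q) {x : ℝ} (hx : 0 < x) :
    ∃ j, altVal q (3 + j) < x := by
  obtain ⟨j, hj⟩ := exists_pow_lt_of_lt_one (div_pos hx (altVal_pos hq 3))
    (inv_lt_one_of_one_lt₀ hq)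
  refine ⟨j, ?_⟩
  rw [altVal_add, div_eq_mul_inv, ← inv_pow, mul_comm]
  exact (lt_div_iff₀ (altVal_pos hq 3)).1 hj

lemma altVal_zero_one_two_three {q : ℝ} (hq : 1 < q) :
    altVal q 0 = q / (q ^ 2 - 1) ∧ altVal q 1 = 1 / (q ^ 2 - 1) ∧
      altVal q 2 = 1 / (q * (q ^ 2 - 1)) ∧ altVal q 3 = 1 / (q ^ 2 * (q ^ 2 - 1)) := by
  have : q ≠ 0 := by positivity
  have : q ^ 2 - 1 ≠ 0 := by nlinarith
  refine ⟨?_, ?_, ?_, ?_⟩ <;> (rw [altVal]; field_simp)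

/-- `(0, ((0^3(10)^∞))_{q_G}) ∪ ⋃_{k=0}^2 (((0^k(10)^∞))_{q_KL}, ((0^k(10)^∞))_{q_G})`
is contained in `(⋃_{n=2}^∞ D_n) ∩ (0,1)`. -/
theorem subset_union_D (τ : ℕ → ℕ) (hτ : IsThueMorse τ) (qKL : ℝ) (hKL : IsKL τ qKL)
    (Q : ℕ → ℝ) (hQ : IsBaseSeq τ Q) :
    (Set.Ioo 0 (1 / (qG ^ 2 * (qG ^ 2 - 1))) ∪
     Set.Ioo (qKL / (qKL ^ 2 - 1)) (qG / (qG ^ 2 - 1)) ∪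
     Set.Ioo (1 / (qKL ^ 2 - 1)) (1 / (qG ^ 2 - 1)) ∪
     Set.Ioo (1 / (qKL * (qKL ^ 2 - 1))) (1 / (qG * (qG ^ 2 - 1)))) ⊆
      (⋃ n ∈ {n : ℕ | 2 ≤ n}, D Q n) ∩ Set.Ioo 0 1 := by
  have hKLgt := hKL.eightyNine_div_fifty_lt hτ
  have hGK : φ < qKL := goldenRatio_lt.trans (by linarith)
  have hmem : ∀ k,
      Ioo (altVal qKL k) (altVal φ k) ⊆ (⋃ n ∈ {n : ℕ | 2 ≤ n}, D Q n) ∩ Ioo 0 1 := by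
    intro k x hx
    obtain ⟨q, ⟨hGq, hqK⟩, rfl⟩ := exists_altVal_eq hGK k hx
    exact ⟨Uset_subset_iUnion_D hτ hKL hQ hGq hqK (altVal_mem_Uset hGq k), altVal_mem_Ioo hGq k⟩
  have hcover : Ioo 0 (altVal φ (3 + 0)) ⊆ ⋃ j, Ioo (altVal qKL (3 + j)) (altVal φ (3 + j)) :=
    Ioo_subset_iUnion_Ioo (b := fun j => altVal φ (3 + j)) (altVal_three_add_lt hKLgt)
      fun _ hx => exists_altVal_three_add_lt hKL.1 hx
  obtain ⟨hK0, hK1, hK2, -⟩ := altVal_zero_one_two_three hKL.1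
  obtain ⟨hG0, hG1, hG2, hG3⟩ := altVal_zero_one_two_three one_lt_goldenRatio
  rw [qG_eq_goldenRatio, ← hK0, ← hK1, ← hK2, ← hG0, ← hG1, ← hG2, ← hG3]
  refine union_subset (union_subset (union_subset ?_ (hmem 0)) (hmem 1)) (hmem 2)
  exact hcover.trans (iUnion_subset fun j => hmem (3 + j))
end
end

section
/- Let x > 0 and n ≥ 1. Then q_s(x) ∈ (q_{n−1}, q_n] if and only if x ∈ D_n \ ∪_{k=1}^{n−1} D_k. -/
open Filter Topology

noncomputable section

/-!
`q_s(x) ∈ (q_{n-1}, q_n]` holds iff `U(x)` meets `(q_{n-1}, q_n]` but contains no base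
`≤ q_{n-1}`, i.e. iff `x ∈ D_n \ ⋃_{k<n} D_k`, as soon as the infimum of `U(x)` is attained
whenever it equals some `q_k`. For `k = 0` there is nothing to attain: below the golden ratio
only `0^∞` and `1^∞` are unique expansions, so `inf U(x) ≥ min(φ, 1 + 1/x) > 1`.

For `k ≥ 1`, take bases `p_j ↓ q_k` in `U(x)` and the unique expansions of `x` in them. A
subsequence converges digitwise to an expansion of `x` in base `q_k` satisfying the admissibility
conditions with `≤` in place of `<`. A tail of value `1` after a digit `0` cannot occur, as it
would make the expansions in the bases `p_j ≥ q_k` too small. A reflected tail of value `1` after a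
digit `1` is a weakly admissible expansion of `1`, hence equals the quasi-greedy expansion
`(τ_1 ⋯ τ_{2^k - 1} 0)^∞`; by `τ_{2^{k-1}+j} = 1 - τ_j` this yields, `2^{k-1}` places later, a digit
`0` followed by a tail of value `1`. So the limit is admissible, i.e. the unique expansion of `x` in
base `q_k`.
-/

open Finset

section ThueMorse

variable {τ : ℕ → ℕ}

lemma IsThueMorse.le_one_s15 (hτ : IsThueMorse τ) (n : ℕ) : τ n ≤ 1 := by
  induction n using Nat.strong_induction_on with
  | _ n ih =>
    obtain ⟨k, rfl | rfl⟩ := Nat.even_or_odd' n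
    · rcases k.eq_zero_or_pos with rfl | hk
      · rw [hτ.1]; omega
      · rw [hτ.2.1]; exact ih k (by omega)
    · rw [hτ.2.2]; omega

lemma IsThueMorse.one (hτ : IsThueMorse τ) : τ 1 = 1 := by
  simpa [hτ.1] using hτ.2.2 0

lemma IsThueMorse.two_pow (hτ : IsThueMorse τ) (a : ℕ) : τ (2 ^ a) = 1 := by
  induction a with
  | zero => exact hτ.one
  | succ a ih => rw [pow_succ', hτ.2.1, ih]

lemma IsThueMorse.two_pow_add (hτ : IsThueMorse τ) {a j : ℕ} (hj : j < 2 ^ a) :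
    τ (2 ^ a + j) = 1 - τ j := by
  induction a generalizing j with
  | zero =>
    obtain rfl : j = 0 := by omega
    rw [pow_zero, add_zero, hτ.one, hτ.1]
  | succ a ih =>
    obtain ⟨i, rfl | rfl⟩ := Nat.even_or_odd' j
    · rw [pow_succ', ← mul_add, hτ.2.1, hτ.2.1, ih (by rw [pow_succ'] at hj; omega)]
    · rw [pow_succ', ← add_assoc, ← mul_add, hτ.2.2, hτ.2.2, ih (by rw [pow_succ'] at hj; omega)]

lemma IsThueMorse.seqLt_shift_two_mul (hτ : IsThueMorse τ) {k : ℕ} (hk : τ k = 0)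
    (h : seqLt (fun i => τ (k + i + 1)) (fun i => τ (i + 1))) :
    seqLt (fun i => τ (2 * k + i + 1)) (fun i => τ (i + 1)) := by
  obtain ⟨n, hpre, hlt⟩ := h
  simp only at hpre hlt
  refine ⟨2 * n + 1, fun i hi => ?_, ?_⟩
  · simp only
    obtain ⟨i, rfl | rfl⟩ := Nat.even_or_odd' i
    · rw [← mul_add, hτ.2.2, hτ.2.2]
      rcases i.eq_zero_or_pos with rfl | hi0
      · rw [add_zero, hk, hτ.1]
      · have := hpre (i - 1) (by omega)
        rw [show k + (i - 1) + 1 = k + i by omega, show i - 1 + 1 = i by omega] at this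
        rw [this]
    · rw [show 2 * k + (2 * i + 1) + 1 = 2 * (k + i + 1) by ring,
        show 2 * i + 1 + 1 = 2 * (i + 1) by ring, hτ.2.1, hτ.2.1]
      exact hpre i (by omega)
  · simp only
    rw [show 2 * k + (2 * n + 1) + 1 = 2 * (k + n + 1) by ring,
      show 2 * n + 1 + 1 = 2 * (n + 1) by ring, hτ.2.1, hτ.2.1]
    exact hlt

theorem IsThueMorse.seqLt_shift (hτ : IsThueMorse τ) {k : ℕ} (hk : 1 ≤ k) :
    seqLt (fun i => τ (k + i + 1)) (fun i => τ (i + 1)) := by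
  induction k using Nat.strong_induction_on with
  | _ k ih =>
    obtain ⟨k, rfl | rfl⟩ := Nat.even_or_odd' k
    · rcases Nat.le_one_iff_eq_zero_or_eq_one.1 (hτ.le_one_s15 k) with h0 | h1
      · exact hτ.seqLt_shift_two_mul h0 (ih k (by omega) (by omega))
      · refine ⟨0, by simp, ?_⟩
        simp only [add_zero, zero_add]
        rw [hτ.2.2, h1, hτ.one]
        omega
    · rcases Nat.le_one_iff_eq_zero_or_eq_one.1 (hτ.le_one_s15 (k + 1)) with h0 | h1
      · refine ⟨0, by simp, ?_⟩
        simp only [add_zero, zero_add]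
        rw [show 2 * k + 1 + 1 = 2 * (k + 1) by ring, hτ.2.1, h0, hτ.one]
        omega
      · refine ⟨1, fun i hi => ?_, ?_⟩
        · obtain rfl : i = 0 := by omega
          simp only [add_zero, zero_add]
          rw [show 2 * k + 1 + 1 = 2 * (k + 1) by ring, hτ.2.1, h1, hτ.one]
        · simp only
          rw [show 2 * k + 1 + 1 + 1 = 2 * (k + 1) + 1 by ring, hτ.2.2, h1,
            show (1 + 1 : ℕ) = 2 * 1 by rfl, hτ.2.1, hτ.one]
          omega

end ThueMorse

section BaseSeq

variable {τ : ℕ → ℕ} {Q : ℕ → ℝ}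

lemma IsBaseSeq.one_le (hQ : IsBaseSeq τ Q) (k : ℕ) : 1 ≤ Q k := by
  rcases k.eq_zero_or_pos with rfl | hk
  exacts [hQ.1.ge, (hQ.2 k hk).1.le]

lemma IsBaseSeq.lt_two (hQ : IsBaseSeq τ Q) (k : ℕ) : Q k < 2 := by
  rcases k.eq_zero_or_pos with rfl | hk
  exacts [by rw [hQ.1]; norm_num, (hQ.2 k hk).2.1]

/-- At `q_k`, the longer sum defining `q_{k+1}` exceeds `1` by its positive extra terms, and these
sums decrease in `q`. -/
theorem IsBaseSeq.strictMono (hτ : IsThueMorse τ) (hQ : IsBaseSeq τ Q) : StrictMono Q := by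
  refine strictMono_nat_of_lt_succ fun k => ?_
  rcases k.eq_zero_or_pos with rfl | hk
  · rw [hQ.1]; exact (hQ.2 1 le_rfl).1
  by_contra! hle
  have hQk : 0 < Q (k + 1) := by linarith [hQ.one_le (k + 1)]
  have hsplit := sum_range_add (fun i => (τ (i + 1) : ℝ) / Q k ^ (i + 1)) (2 ^ k) (2 ^ k)
  rw [← two_mul, ← pow_succ', ← (hQ.2 k hk).2.2] at hsplit
  have hextra : 0 < ∑ i ∈ range (2 ^ k), (τ (2 ^ k + i + 1) : ℝ) / Q k ^ (2 ^ k + i + 1) := by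
    have hQk : 0 < Q k := by linarith [hQ.one_le k]
    refine sum_pos' (fun i _ => by positivity) ⟨2 ^ k - 1, mem_range.2 (by simp), ?_⟩
    rw [show 2 ^ k + (2 ^ k - 1) + 1 = 2 ^ (k + 1) by
      rw [pow_succ]; have := Nat.one_le_two_pow (n := k); omega, hτ.two_pow, Nat.cast_one]
    positivity
  have hanti : ∑ i ∈ range (2 ^ (k + 1)), (τ (i + 1) : ℝ) / Q k ^ (i + 1)
      ≤ ∑ i ∈ range (2 ^ (k + 1)), (τ (i + 1) : ℝ) / Q (k + 1) ^ (i + 1) :=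
    sum_le_sum fun i _ => by gcongr
  rw [← (hQ.2 (k + 1) (by omega)).2.2] at hanti
  linarith

end BaseSeq

namespace Univoque

def shift (d : ℕ → ℕ) (n : ℕ) : ℕ → ℕ := fun k => d (n + k)

def reflectSeq (d : ℕ → ℕ) : ℕ → ℕ := fun k => 1 - d k

lemma shift_shift (d : ℕ → ℕ) (a b : ℕ) : shift (shift d a) b = shift d (a + b) := by
  ext k; simp only [shift, add_assoc]

lemma shift_reflectSeq (d : ℕ → ℕ) (n : ℕ) : shift (reflectSeq d) n = reflectSeq (shift d n) := rfl

lemma reflectSeq_reflectSeq {d : ℕ → ℕ} (hd : ∀ i, d i ≤ 1) : reflectSeq (reflectSeq d) = d := by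
  ext k; have := hd k; simp only [reflectSeq]; omega

lemma shift_le_one {d : ℕ → ℕ} (hd : ∀ i, d i ≤ 1) (n : ℕ) : ∀ i, shift d n i ≤ 1 :=
  fun _ => hd _

lemma reflectSeq_le_one (d : ℕ → ℕ) : ∀ i, reflectSeq d i ≤ 1 := fun _ => Nat.sub_le _ _

section Value

variable {q : ℝ} {c d : ℕ → ℕ}

lemma hasSum_one_div_pow_succ (hq : 1 < q) :
    HasSum (fun i : ℕ => 1 / q ^ (i + 1)) (1 / (q - 1)) := by
  have hq0 : 0 < q := by linarith
  have h := (hasSum_geometric_of_lt_one (inv_nonneg.2 hq0.le) (inv_lt_one_of_one_lt₀ hq)).mul_left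
    q⁻¹
  have hterm : (fun i : ℕ => 1 / q ^ (i + 1)) = fun i => q⁻¹ * q⁻¹ ^ i := by
    ext i; rw [one_div, pow_succ', mul_inv, inv_pow]
  have hsum : 1 / (q - 1) = q⁻¹ * (1 - q⁻¹)⁻¹ := by
    field_simp [(by linarith : q - 1 ≠ 0)]
  rwa [hterm, hsum]

lemma summable_digits (hq : 1 < q) (hd : ∀ i, d i ≤ 1) :
    Summable fun i => (d i : ℝ) / q ^ (i + 1) := by
  refine (hasSum_one_div_pow_succ hq).summable.of_nonneg_of_le (fun i => by positivity)
    fun i => ?_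
  gcongr
  exact_mod_cast hd i

lemma seqVal_nonneg (hq : 0 ≤ q) (d : ℕ → ℕ) : 0 ≤ seqVal q d :=
  tsum_nonneg fun i => by positivity

lemma seqVal_le (hq : 1 < q) (hd : ∀ i, d i ≤ 1) : seqVal q d ≤ 1 / (q - 1) := by
  refine hasSum_le (fun i => ?_) (summable_digits hq hd).hasSum (hasSum_one_div_pow_succ hq)
  gcongr
  exact_mod_cast hd i

lemma seqVal_pos (hq : 1 < q) (hd : ∀ i, d i ≤ 1) {k : ℕ} (hk : d k ≠ 0) : 0 < seqVal q d := by
  have hq0 : 0 < q := by linarith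
  refine (summable_digits hq hd).tsum_pos (fun i => by positivity) k ?_
  have : (0 : ℝ) < d k := by exact_mod_cast Nat.pos_of_ne_zero hk
  positivity

lemma seqVal_reflectSeq (hq : 1 < q) (hd : ∀ i, d i ≤ 1) :
    seqVal q (reflectSeq d) = 1 / (q - 1) - seqVal q d := by
  calc seqVal q (reflectSeq d) = ∑' i, (1 / q ^ (i + 1) - (d i : ℝ) / q ^ (i + 1)) :=
        tsum_congr fun i => by rw [reflectSeq, Nat.cast_sub (hd i), Nat.cast_one, sub_div]
    _ = 1 / (q - 1) - seqVal q d :=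
        ((hasSum_one_div_pow_succ hq).sub (summable_digits hq hd).hasSum).tsum_eq

lemma seqVal_eq_sum_add (hq : 1 < q) (hd : ∀ i, d i ≤ 1) (N : ℕ) :
    seqVal q d = ∑ k ∈ range N, (d k : ℝ) / q ^ (k + 1) + seqVal q (shift d N) / q ^ N := by
  rw [seqVal, ← (summable_digits hq hd).sum_add_tsum_nat_add N, seqVal, ← tsum_div_const]
  congr 1
  refine tsum_congr fun k => ?_
  rw [shift, add_comm N k, div_div, ← pow_add]
  ring_nf

lemma seqVal_eq_sum_add_digit (hq : 1 < q) (hd : ∀ i, d i ≤ 1) (i : ℕ) :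
    seqVal q d = ∑ k ∈ range i, (d k : ℝ) / q ^ (k + 1)
      + ((d i : ℝ) + seqVal q (shift d (i + 1))) / q ^ (i + 1) := by
  rw [seqVal_eq_sum_add hq hd (i + 1), sum_range_succ, add_assoc, add_div]

lemma seqVal_eq_div (hq : 1 < q) (hd : ∀ i, d i ≤ 1) :
    seqVal q d = ((d 0 : ℝ) + seqVal q (shift d 1)) / q := by
  simpa using seqVal_eq_sum_add_digit hq hd 0

lemma seqVal_eq_iff (hq : 1 < q) (hc : ∀ i, c i ≤ 1) (hd : ∀ i, d i ≤ 1) {i : ℕ}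
    (h : ∀ k < i, c k = d k) :
    seqVal q c = seqVal q d ↔
      (c i : ℝ) + seqVal q (shift c (i + 1)) = d i + seqVal q (shift d (i + 1)) := by
  have hpre : ∑ k ∈ range i, (c k : ℝ) / q ^ (k + 1) = ∑ k ∈ range i, (d k : ℝ) / q ^ (k + 1) :=
    sum_congr rfl fun k hk => by rw [h k (mem_range.1 hk)]
  have hpow : q ^ (i + 1) ≠ 0 := pow_ne_zero _ (by linarith)
  rw [seqVal_eq_sum_add_digit hq hc i, seqVal_eq_sum_add_digit hq hd i, hpre, add_right_inj,
    div_left_inj' hpow]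

end Value

section Convergence

variable {ι : Type*} {l : Filter ι} {q : ℝ} {f : ι → ℝ} {d : ι → ℕ → ℕ} {e : ℕ → ℕ}

theorem tendsto_seqVal (hq : 1 < q) (hf : Tendsto f l (𝓝 q)) (hd : ∀ j i, d j i ≤ 1)
    (hde : ∀ i, ∀ᶠ j in l, d j i = e i) :
    Tendsto (fun j => seqVal (f j) (d j)) l (𝓝 (seqVal q e)) := by
  obtain ⟨r, hr1, hrq⟩ := exists_between hq
  have hr0 : 0 < r := by linarith
  refine tendsto_tsum_of_dominated_convergence (hasSum_one_div_pow_succ hr1).summable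
    (fun i => ?_) ?_
  · have hdigit : Tendsto (fun j => (d j i : ℝ)) l (𝓝 (e i)) :=
      tendsto_const_nhds.congr' ((hde i).mono fun j hj => by simp [hj])
    exact hdigit.div (hf.pow _) (pow_ne_zero _ (by linarith))
  · filter_upwards [hf.eventually (lt_mem_nhds hrq)] with j hj i
    have hfj : 0 < f j := hr0.trans hj
    rw [Real.norm_of_nonneg (by positivity)]
    gcongr
    exact_mod_cast hd j i

end Convergence

section Greedy

variable {q y : ℝ}

def greedyRem (q y : ℝ) : ℕ → ℝ
  | 0 => y
  | n + 1 => if 1 ≤ q * greedyRem q y n then q * greedyRem q y n - 1 else q * greedyRem q y n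

def greedyDigit (q y : ℝ) (n : ℕ) : ℕ := if 1 ≤ q * greedyRem q y n then 1 else 0

lemma greedyDigit_le_one (n : ℕ) : greedyDigit q y n ≤ 1 := by
  unfold greedyDigit; split <;> omega

lemma mul_greedyRem (n : ℕ) :
    q * greedyRem q y n = greedyDigit q y n + greedyRem q y (n + 1) := by
  simp only [greedyDigit, greedyRem]
  split <;> simp

lemma greedyRem_mem_Icc (hq1 : 1 < q) (hq2 : q ≤ 2) (hy : y ∈ Set.Icc 0 (1 / (q - 1))) (n : ℕ) :
    greedyRem q y n ∈ Set.Icc 0 (1 / (q - 1)) := by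
  have hq0 : 0 < q - 1 := by linarith
  induction n with
  | zero => exact hy
  | succ n ih =>
    obtain ⟨h0, h1⟩ := ih
    rw [le_div_iff₀ hq0] at h1
    simp only [greedyRem, Set.mem_Icc, le_div_iff₀ hq0]
    split_ifs with h <;> constructor <;> nlinarith

lemma eq_sum_greedyDigit_add (hq : 1 < q) (N : ℕ) :
    y = ∑ k ∈ range N, (greedyDigit q y k : ℝ) / q ^ (k + 1) + greedyRem q y N / q ^ N := by
  have hq0 : q ≠ 0 := by positivity
  induction N with
  | zero => simp [greedyRem]
  | succ N ih =>
    rw [sum_range_succ, add_assoc, ← add_div, ← mul_greedyRem, pow_succ, mul_comm q,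
      mul_div_mul_right _ _ hq0]
    exact ih

theorem exists_seqVal_eq (hq1 : 1 < q) (hq2 : q ≤ 2) (hy : y ∈ Set.Icc 0 (1 / (q - 1))) :
    ∃ d : ℕ → ℕ, (∀ i, d i ≤ 1) ∧ seqVal q d = y := by
  refine ⟨greedyDigit q y, greedyDigit_le_one, tendsto_nhds_unique
    (summable_digits hq1 greedyDigit_le_one).hasSum.tendsto_sum_nat ?_⟩
  have hrem : Tendsto (fun N => greedyRem q y N / q ^ N) atTop (𝓝 0) := by
    refine squeeze_zero (fun N => div_nonneg (greedyRem_mem_Icc hq1 hq2 hy N).1 (by positivity))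
      (fun N => div_le_div_of_nonneg_right (greedyRem_mem_Icc hq1 hq2 hy N).2 (by positivity)) ?_
    simpa using (tendsto_pow_atTop_atTop_of_one_lt hq1).const_div_atTop (1 / (q - 1))
  have hlim := (tendsto_const_nhds (x := y)).sub hrem
  rw [sub_zero] at hlim
  exact hlim.congr fun N => by rw [sub_eq_iff_eq_add]; exact eq_sum_greedyDigit_add hq1 N

end Greedy

lemma exists_first_ne {c d : ℕ → ℕ} (h : c ≠ d) : ∃ n, (∀ k < n, c k = d k) ∧ c n ≠ d n := by
  classical
  have hex : ∃ n, c n ≠ d n := Function.ne_iff.1 h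
  exact ⟨Nat.find hex, fun k hk => not_not.1 (Nat.find_min hex hk), Nat.find_spec hex⟩

def IsAdmissible (q : ℝ) (d : ℕ → ℕ) : Prop :=
  (∀ i, d i ≤ 1) ∧ ∀ i, (d i = 0 → seqVal q (shift d (i + 1)) < 1) ∧
    (d i = 1 → seqVal q (shift (reflectSeq d) (i + 1)) < 1)

def IsWeaklyAdmissible (q : ℝ) (d : ℕ → ℕ) : Prop :=
  (∀ i, d i ≤ 1) ∧ ∀ i, (d i = 0 → seqVal q (shift d (i + 1)) ≤ 1) ∧
    (d i = 1 → seqVal q (shift (reflectSeq d) (i + 1)) ≤ 1)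

section Admissible

variable {q x : ℝ} {c d : ℕ → ℕ}

lemma IsAdmissible.reflectSeq (hd : IsAdmissible q d) : IsAdmissible q (reflectSeq d) := by
  refine ⟨reflectSeq_le_one d, fun i => ⟨fun h0 => (hd.2 i).2 ?_, fun h1 => ?_⟩⟩
  · have := hd.1 i; simp only [Univoque.reflectSeq] at h0; omega
  · rw [reflectSeq_reflectSeq hd.1]
    exact (hd.2 i).1 (by simp only [Univoque.reflectSeq] at h1; omega)

lemma IsWeaklyAdmissible.reflectSeq (hd : IsWeaklyAdmissible q d) :
    IsWeaklyAdmissible q (reflectSeq d) := by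
  refine ⟨reflectSeq_le_one d, fun i => ⟨fun h0 => (hd.2 i).2 ?_, fun h1 => ?_⟩⟩
  · have := hd.1 i; simp only [Univoque.reflectSeq] at h0; omega
  · rw [reflectSeq_reflectSeq hd.1]
    exact (hd.2 i).1 (by simp only [Univoque.reflectSeq] at h1; omega)

lemma IsWeaklyAdmissible.shift (hd : IsWeaklyAdmissible q d) (n : ℕ) :
    IsWeaklyAdmissible q (shift d n) := by
  refine ⟨fun i => hd.1 _, fun i => ⟨fun h0 => ?_, fun h1 => ?_⟩⟩
  · rw [shift_shift]; exact (hd.2 (n + i)).1 h0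
  · rw [← shift_reflectSeq, shift_shift]; exact (hd.2 (n + i)).2 h1

theorem eq_of_isAdmissible (hq : 1 < q) (hc : ∀ i, c i ≤ 1) (hd : IsAdmissible q d)
    (h : seqVal q c = seqVal q d) : c = d := by
  by_contra hne
  obtain ⟨n, hpre, hn⟩ := exists_first_ne hne
  have hdigits := (seqVal_eq_iff hq hc hd.1 hpre).1 h
  have hq0 : 0 ≤ q := by linarith
  have hcn := hc n
  have hdn := hd.1 n
  rcases Nat.le_one_iff_eq_zero_or_eq_one.1 hdn with h0 | h1
  · have hc1 : c n = 1 := by omega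
    rw [hc1, h0] at hdigits
    have := (hd.2 n).1 h0
    have := seqVal_nonneg hq0 (shift c (n + 1))
    push_cast at hdigits
    linarith
  · have hc0 : c n = 0 := by omega
    rw [hc0, h1] at hdigits
    have := (hd.2 n).2 h1
    rw [shift_reflectSeq, seqVal_reflectSeq hq (shift_le_one hd.1 _)] at this
    have := seqVal_le hq (shift_le_one hc (n + 1))
    push_cast at hdigits
    linarith

lemma reflectSeq_mem_USeq (hq : 1 < q) (hd : d ∈ USeq q) : reflectSeq d ∈ USeq q := by
  refine ⟨reflectSeq_le_one d, fun e he => ?_⟩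
  have hval : seqVal q (reflectSeq e) = seqVal q d := by
    rw [seqVal_reflectSeq hq he.1, ← he.2, seqVal_reflectSeq hq hd.1, sub_sub_cancel]
  rw [← hd.2 _ ⟨reflectSeq_le_one e, hval.symm⟩, reflectSeq_reflectSeq he.1]

/-- Otherwise the digit `0` can be raised to `1` and the excess `T - 1 ∈ [0, 1/(q-1)]` of the tail
value `T ≥ 1` re-expanded, giving a second expansion. -/
lemma seqVal_shift_lt_one_of_mem_USeq (hq1 : 1 < q) (hq2 : q ≤ 2) (hd : d ∈ USeq q) {i : ℕ}
    (hi : d i = 0) : seqVal q (shift d (i + 1)) < 1 := by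
  by_contra! hT
  have hT' := seqVal_le hq1 (shift_le_one hd.1 (i + 1))
  obtain ⟨g, hg, hgval⟩ := exists_seqVal_eq hq1 hq2
    (y := seqVal q (shift d (i + 1)) - 1) ⟨by linarith, by linarith⟩
  set e : ℕ → ℕ := fun k => if k < i then d k else if k = i then 1 else g (k - (i + 1)) with he
  have he1 : ∀ k, e k ≤ 1 := fun k => by
    simp only [he]; split_ifs
    exacts [hd.1 k, le_rfl, hg _]
  have hei : e i = 1 := by simp [he]
  have hshift : shift e (i + 1) = g := by
    ext k; simp only [he, shift]; rw [if_neg (by omega), if_neg (by omega)]; congr 1; omega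
  have hval : seqVal q e = seqVal q d := by
    rw [seqVal_eq_iff hq1 he1 hd.1 (i := i) fun k hk => by simp [he, hk], hei, hshift, hgval, hi]
    push_cast; ring
  have := hd.2 e ⟨he1, hval.symm⟩
  rw [← this, hei] at hi
  exact one_ne_zero hi

theorem isAdmissible_iff_mem_USeq (hq1 : 1 < q) (hq2 : q ≤ 2) : IsAdmissible q d ↔ d ∈ USeq q := by
  refine ⟨fun hd => ⟨hd.1, fun e he => eq_of_isAdmissible hq1 he.1 hd he.2.symm⟩,
    fun hd => ⟨hd.1, fun i => ⟨seqVal_shift_lt_one_of_mem_USeq hq1 hq2 hd, fun h1 => ?_⟩⟩⟩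
  exact seqVal_shift_lt_one_of_mem_USeq hq1 hq2 (reflectSeq_mem_USeq hq1 hd)
    (by simp [Univoque.reflectSeq, h1])

theorem hasUniqueExpansion_iff (hq1 : 1 < q) (hq2 : q ≤ 2) :
    HasUniqueExpansion q x ↔ ∃ d, IsAdmissible q d ∧ seqVal q d = x := by
  constructor
  · rintro ⟨d, ⟨hd, hx⟩, huniq⟩
    exact ⟨d, (isAdmissible_iff_mem_USeq hq1 hq2).2 ⟨hd, fun e he => huniq e (hx ▸ he)⟩, hx.symm⟩
  · rintro ⟨d, hd, rfl⟩
    exact ⟨d, ⟨hd.1, rfl⟩, fun e he => eq_of_isAdmissible hq1 he.1 hd he.2.symm⟩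

end Admissible

section GoldenRatio

open Real

variable {q x : ℝ} {d : ℕ → ℕ}

lemma IsAdmissible.ne_one_of_eq_zero (hq1 : 1 < q) (hqφ : q ≤ goldenRatio)
    (hd : IsAdmissible q d) {i : ℕ} (hi : d i = 0) : d (i + 1) ≠ 1 := by
  intro hi1
  have htail := seqVal_eq_div hq1 (shift_le_one hd.1 (i + 1))
  rw [shift_shift, show shift d (i + 1) 0 = 1 from hi1, Nat.cast_one] at htail
  have hlt := (hd.2 i).1 hi
  have hrefl := (hd.2 (i + 1)).2 hi1
  rw [shift_reflectSeq, seqVal_reflectSeq hq1 (shift_le_one hd.1 _)] at hrefl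
  have hgold : q * (q - 1) ≤ 1 := by nlinarith [goldenRatio_sq, one_lt_goldenRatio]
  have hq0 : 0 < q - 1 := by linarith
  rw [htail, div_lt_one (by linarith)] at hlt
  have : 1 / (q - 1) < q := by linarith
  rw [div_lt_iff₀ hq0] at this
  linarith

theorem IsAdmissible.eq_const (hq1 : 1 < q) (hqφ : q ≤ goldenRatio) (hd : IsAdmissible q d)
    (i : ℕ) : d i = d 0 := by
  induction i with
  | zero => rfl
  | succ i ih =>
    rw [← ih]
    rcases Nat.le_one_iff_eq_zero_or_eq_one.1 (hd.1 i) with h0 | h1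
    · have := hd.ne_one_of_eq_zero hq1 hqφ h0
      have := hd.1 (i + 1)
      omega
    · have := hd.reflectSeq.ne_one_of_eq_zero hq1 hqφ (i := i) (by simp [Univoque.reflectSeq, h1])
      simp only [Univoque.reflectSeq] at this
      have := hd.1 (i + 1)
      omega

lemma min_le_of_mem_UBases (hx : 0 < x) (hq : q ∈ UBases x) : min goldenRatio (1 + 1 / x) ≤ q := by
  obtain ⟨hq1, hq2, hu⟩ := hq
  rcases le_or_gt goldenRatio q with hφ | hφ
  · exact min_le_of_left_le hφ
  obtain ⟨d, hd, rfl⟩ := (hasUniqueExpansion_iff hq1 hq2.le).1 hu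
  have hconst := hd.eq_const hq1 hφ.le
  have hshift : shift d 1 = d := by ext k; simp [shift, hconst]
  have hval := seqVal_eq_div hq1 hd.1
  rw [hshift, eq_div_iff (by linarith)] at hval
  rcases Nat.le_one_iff_eq_zero_or_eq_one.1 (hd.1 0) with h0 | h1
  · rw [h0, Nat.cast_zero] at hval
    nlinarith
  · rw [h1, Nat.cast_one] at hval
    refine min_le_of_right_le (le_of_eq ?_)
    field_simp
    linarith

lemma sInf_UBases_ne_one (hx : 0 < x) : sInf (UBases x) ≠ 1 := by
  rcases (UBases x).eq_empty_or_nonempty with h | h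
  · rw [h, Real.sInf_empty]; norm_num
  · refine ne_of_gt (lt_of_lt_of_le ?_ (le_csInf h fun q hq => min_le_of_mem_UBases hx hq))
    exact lt_min one_lt_goldenRatio (by simp [hx])

end GoldenRatio

section Limit

variable {q x : ℝ} {f : ℕ → ℝ}

/-- Otherwise `seqVal q e ≥ Σ_{k<i} e_k q^{-k-1} + q^{-i-1} ≥ Σ_{k<i} c_k b^{-k-1} + b^{-i-1}`,
which exceeds `seqVal b c` by the admissibility of `c`. -/
lemma seqVal_shift_lt_one_of_le {b : ℝ} {c e : ℕ → ℕ} (hq : 1 < q) (hqb : q ≤ b)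
    (hc : IsAdmissible b c) (he : ∀ k, e k ≤ 1) {i : ℕ} (hce : ∀ k ≤ i, c k = e k)
    (hval : seqVal b c = seqVal q e) (hi : e i = 0) : seqVal q (shift e (i + 1)) < 1 := by
  have hb : 1 < b := hq.trans_le hqb
  have hci : c i = 0 := (hce i le_rfl).trans hi
  have hpre : ∑ k ∈ range i, (c k : ℝ) / b ^ (k + 1) ≤ ∑ k ∈ range i, (e k : ℝ) / q ^ (k + 1) := by
    refine sum_le_sum fun k hk => ?_
    rw [hce k (mem_range.1 hk).le]
    gcongr
  have htail : seqVal b (shift c (i + 1)) / b ^ (i + 1) < 1 / q ^ (i + 1) :=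
    calc _ < 1 / b ^ (i + 1) := by gcongr; exact (hc.2 i).1 hci
      _ ≤ 1 / q ^ (i + 1) := by gcongr
  have hcval := seqVal_eq_sum_add_digit hb hc.1 i
  have heval := seqVal_eq_sum_add_digit hq he i
  rw [hci, Nat.cast_zero, zero_add] at hcval
  rw [hi, Nat.cast_zero, zero_add] at heval
  have : seqVal q (shift e (i + 1)) / q ^ (i + 1) < 1 / q ^ (i + 1) := by linarith
  exact (div_lt_div_iff_of_pos_right (by positivity)).1 this

/-- `e` is a digitwise limit point of the unique expansions of `x` in the bases `f j` (compactness
of `{0,1}^ℕ`); the zero-half of admissibility stays strict because `f j ≥ q`. -/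
theorem exists_isWeaklyAdmissible_of_tendsto (hq : 1 < q) (hf : Tendsto f atTop (𝓝 q))
    (hqf : ∀ j, q ≤ f j) (hU : ∀ j, f j ∈ UBases x) :
    ∃ e, IsWeaklyAdmissible q e ∧ seqVal q e = x ∧
      ∀ i, e i = 0 → seqVal q (shift e (i + 1)) < 1 := by
  choose d hd hdx using fun j => (hasUniqueExpansion_iff (hU j).1 (hU j).2.1.le).1 (hU j).2.2
  have hcompact : IsCompact (Set.univ.pi fun _ : ℕ => Set.Iic 1) :=
    isCompact_univ_pi fun _ => (Set.finite_Iic 1).isCompact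
  obtain ⟨e, he, φ, hφ, hlim⟩ :=
    hcompact.tendsto_subseq (x := d) fun j => Set.mem_univ_pi.2 (hd j).1
  have he1 : ∀ i, e i ≤ 1 := Set.mem_univ_pi.1 he
  have hdigit : ∀ i, ∀ᶠ j in atTop, d (φ j) i = e i := fun i =>
    tendsto_pure.1 (by simpa [nhds_discrete] using tendsto_pi_nhds.1 hlim i)
  have hfφ : Tendsto (fun j => f (φ j)) atTop (𝓝 q) := hf.comp hφ.tendsto_atTop
  have hvalue : seqVal q e = x :=
    tendsto_nhds_unique (tendsto_seqVal hq hfφ (fun j => (hd (φ j)).1) hdigit)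
      (tendsto_const_nhds.congr fun j => (hdx (φ j)).symm)
  have hzero : ∀ i, e i = 0 → seqVal q (shift e (i + 1)) < 1 := fun i hi => by
    obtain ⟨j, hj⟩ := ((eventually_all_finset (range (i + 1))).2 fun k _ => hdigit k).exists
    exact seqVal_shift_lt_one_of_le hq (hqf _) (hd (φ j)) he1
      (fun k hk => hj k (mem_range.2 (Nat.lt_succ_of_le hk))) ((hdx _).trans hvalue.symm) hi
  refine ⟨e, ⟨he1, fun i => ⟨fun h0 => (hzero i h0).le, fun h1 => ?_⟩⟩, hvalue, hzero⟩
  have hrefl := tendsto_seqVal hq hfφ (fun j => shift_le_one (reflectSeq_le_one (d (φ j))) (i + 1))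
    (e := shift (reflectSeq e) (i + 1))
    fun k => (hdigit (i + 1 + k)).mono fun j hj => by simp [shift, reflectSeq, hj]
  exact le_of_tendsto hrefl ((hdigit i).mono fun j hj => (((hd (φ j)).2 i).2 (hj.trans h1)).le)

end Limit

section LexMax

variable {q : ℝ} {d g h : ℕ → ℕ}

/-- Compare the largest tail over one period with `d` at the first digit where the two differ. -/
theorem seqVal_shift_le_one_of_lexMax (hq : 1 < q) (hd : ∀ i, d i ≤ 1) {p : ℕ} (hp : 0 < p)
    (hper : ∀ k, d (k + p) = d k) (hmax : ∀ k, shift d k = d ∨ seqLt (shift d k) d)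
    (h1 : seqVal q d ≤ 1) (a : ℕ) : seqVal q (shift d a) ≤ 1 := by
  have hper' : ∀ k m, d (k + p * m) = d k := fun k m => by
    induction m with
    | zero => simp
    | succ m ih => rw [mul_add, mul_one, ← add_assoc, hper, ih]
  have hmod : ∀ a, shift d a = shift d (a % p) := fun a => by
    ext k
    conv_lhs => rw [shift, ← Nat.mod_add_div a p, add_right_comm, hper']
    rfl
  obtain ⟨k₀, -, hk₀⟩ := (range p).exists_max_image (fun k => seqVal q (shift d k))
    ⟨0, mem_range.2 hp⟩
  have hle : ∀ a, seqVal q (shift d a) ≤ seqVal q (shift d k₀) := fun a => by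
    rw [hmod a]; exact hk₀ _ (mem_range.2 (Nat.mod_lt _ hp))
  refine (hle a).trans ?_
  rcases hmax k₀ with heq | ⟨j, hpre, hlt⟩
  · rwa [heq]
  have hdigits : shift d k₀ j = 0 ∧ d j = 1 := by
    have := hd j; have := hd (k₀ + j); simp only [shift] at hlt ⊢; omega
  have hr0 : 0 < 1 / q ^ (j + 1) := by positivity
  have hr1 : 1 / q ^ (j + 1) < 1 := by
    rw [div_lt_one (by positivity)]; exact one_lt_pow₀ hq (by omega)
  have hM := seqVal_eq_sum_add_digit hq (shift_le_one hd k₀) j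
  have hV := seqVal_eq_sum_add_digit hq hd j
  rw [sum_congr rfl fun k hk => by rw [hpre k (mem_range.1 hk)], hdigits.1, Nat.cast_zero,
    zero_add, shift_shift, div_eq_mul_one_div] at hM
  rw [hdigits.2, Nat.cast_one, div_eq_mul_one_div] at hV
  have htail := mul_le_mul_of_nonneg_right (hle (k₀ + (j + 1))) hr0.le
  have hnonneg := mul_nonneg (seqVal_nonneg (q := q) (by linarith) (shift d (j + 1))) hr0.le
  nlinarith

theorem eq_of_isWeaklyAdmissible (hq1 : 1 < q) (hq2 : q < 2) (hg : ∀ i, g i ≤ 1)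
    (hg1 : seqVal q g = 1) (hgle : ∀ a, seqVal q (shift g a) ≤ 1)
    (hgpos : ∀ a, 0 < seqVal q (shift g a)) (hh : IsWeaklyAdmissible q h)
    (hh1 : seqVal q h = 1) : h = g := by
  by_contra hne
  obtain ⟨n, hpre, hn⟩ := exists_first_ne hne
  have hdigits := (seqVal_eq_iff hq1 hh.1 hg hpre).1 (hh1.trans hg1.symm)
  have hhn := hh.1 n
  have hgn := hg n
  rcases Nat.le_one_iff_eq_zero_or_eq_one.1 hhn with h0 | h1
  · rw [h0, show g n = 1 by omega] at hdigits
    have := (hh.2 n).1 h0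
    have := hgpos (n + 1)
    push_cast at hdigits
    linarith
  · rw [h1, show g n = 0 by omega] at hdigits
    have hrefl := (hh.2 n).2 h1
    rw [shift_reflectSeq, seqVal_reflectSeq hq1 (shift_le_one hh.1 _)] at hrefl
    have := hgle (n + 1)
    have : 1 < 1 / (q - 1) := by rw [lt_div_iff₀ (by linarith)]; linarith
    push_cast at hdigits
    linarith

end LexMax

/-- `(τ_1 ⋯ τ_{2^m - 1} 0)^∞`: since `τ_{2^m} = 1`, this is the quasi-greedy expansion of `1` in
the base `q_m` defined by `1 = Σ_{i=1}^{2^m} τ_i q^{-i}`. -/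
def tmQuasiGreedy (τ : ℕ → ℕ) (m : ℕ) : ℕ → ℕ :=
  fun k => if k % 2 ^ m = 2 ^ m - 1 then 0 else τ (k % 2 ^ m + 1)

section QuasiGreedy

variable {τ : ℕ → ℕ} {m : ℕ}

lemma tmQuasiGreedy_le_one (hτ : IsThueMorse τ) (k : ℕ) : tmQuasiGreedy τ m k ≤ 1 := by
  unfold tmQuasiGreedy; split
  exacts [zero_le_one, hτ.le_one_s15 _]

lemma tmQuasiGreedy_congr_mod {a b : ℕ} (h : a % 2 ^ m = b % 2 ^ m) :
    tmQuasiGreedy τ m a = tmQuasiGreedy τ m b := by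
  simp only [tmQuasiGreedy, h]

lemma tmQuasiGreedy_add_period (k : ℕ) : tmQuasiGreedy τ m (k + 2 ^ m) = tmQuasiGreedy τ m k :=
  tmQuasiGreedy_congr_mod (Nat.add_mod_right _ _)

lemma tmQuasiGreedy_of_lt {k : ℕ} (hk : k < 2 ^ m - 1) : tmQuasiGreedy τ m k = τ (k + 1) := by
  rw [tmQuasiGreedy, Nat.mod_eq_of_lt (by omega), if_neg hk.ne]

lemma tmQuasiGreedy_period_sub_one : tmQuasiGreedy τ m (2 ^ m - 1) = 0 := by
  rw [tmQuasiGreedy, Nat.mod_eq_of_lt (by have := Nat.one_le_two_pow (n := m); omega), if_pos rfl]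

lemma tmQuasiGreedy_shift_pos (hτ : IsThueMorse τ) (hm : 1 ≤ m) {q : ℝ} (hq : 1 < q) (a : ℕ) :
    0 < seqVal q (shift (tmQuasiGreedy τ m) a) := by
  have hp : 1 < 2 ^ m := Nat.one_lt_two_pow (by omega)
  refine seqVal_pos hq (shift_le_one (tmQuasiGreedy_le_one hτ) a) (k := (2 ^ m - 1) * a) ?_
  have hidx : a + (2 ^ m - 1) * a = 2 ^ m * a := by
    rw [Nat.sub_one_mul]; have := Nat.le_mul_of_pos_left a (by omega : 0 < 2 ^ m); omega
  rw [shift, hidx, tmQuasiGreedy_congr_mod (b := 0) (by simp), tmQuasiGreedy_of_lt (by omega),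
    hτ.one]
  exact one_ne_zero

theorem tmQuasiGreedy_lexMax (hτ : IsThueMorse τ) (hm : 1 ≤ m) (k : ℕ) :
    shift (tmQuasiGreedy τ m) k = tmQuasiGreedy τ m ∨
      seqLt (shift (tmQuasiGreedy τ m) k) (tmQuasiGreedy τ m) := by
  have hp : 1 < 2 ^ m := Nat.one_lt_two_pow (by omega)
  have hmod : shift (tmQuasiGreedy τ m) k = shift (tmQuasiGreedy τ m) (k % 2 ^ m) := by
    ext i; exact tmQuasiGreedy_congr_mod (Nat.mod_add_mod k _ i).symm
  rw [hmod]
  have hk : k % 2 ^ m < 2 ^ m := Nat.mod_lt _ (by omega)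
  generalize k % 2 ^ m = k at hk
  rcases k.eq_zero_or_pos with rfl | hk0
  · left; ext i; simp [shift]
  right
  obtain ⟨n, hpre, hlt⟩ := hτ.seqLt_shift hk0
  simp only at hpre hlt
  have hτn : τ (k + n + 1) = 0 ∧ τ (n + 1) = 1 := by
    have := hτ.le_one_s15 (k + n + 1); have := hτ.le_one_s15 (n + 1); omega
  -- The first difference from `τ` lies inside the period, at its end (impossible, as
  -- `τ_{2^m} = 1`), or beyond it, where the final digit `0` of the period decides.
  rcases lt_trichotomy (k + n + 1) (2 ^ m) with hin | heq | hout
  · refine ⟨n, fun i hi => ?_, ?_⟩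
    · rw [shift, tmQuasiGreedy_of_lt (by omega), tmQuasiGreedy_of_lt (by omega),
        hpre i hi]
    · rw [shift, tmQuasiGreedy_of_lt (by omega), tmQuasiGreedy_of_lt (by omega)]
      exact hlt
  · have := hτ.two_pow m
    rw [← heq, hτn.1] at this
    exact absurd this zero_ne_one
  · refine ⟨2 ^ m - k - 1, fun i hi => ?_, ?_⟩
    · rw [shift, tmQuasiGreedy_of_lt (by omega), tmQuasiGreedy_of_lt (by omega),
        hpre i (by omega)]
    · have hwrap := hpre (2 ^ m - k - 1) (by omega)
      rw [show k + (2 ^ m - k - 1) + 1 = 2 ^ m by omega, hτ.two_pow] at hwrap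
      rw [shift, show k + (2 ^ m - k - 1) = 2 ^ m - 1 by omega, tmQuasiGreedy_period_sub_one,
        tmQuasiGreedy_of_lt (by omega), ← hwrap]
      exact one_pos

theorem tmQuasiGreedy_half_add (hτ : IsThueMorse τ) (hm : 1 ≤ m) (k : ℕ) :
    tmQuasiGreedy τ m (2 ^ (m - 1) + k) = 1 - tmQuasiGreedy τ m k := by
  have hp : 2 ^ m = 2 ^ (m - 1) + 2 ^ (m - 1) := by
    rw [← two_mul, ← pow_succ', Nat.sub_add_cancel hm]
  have hh := Nat.one_le_two_pow (n := m - 1)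
  have hfirst : ∀ j < 2 ^ (m - 1),
      tmQuasiGreedy τ m (2 ^ (m - 1) + j) = 1 - tmQuasiGreedy τ m j := by
    intro j hj
    rcases lt_or_eq_of_le (Nat.le_sub_one_of_lt hj) with hj' | rfl
    · rw [tmQuasiGreedy_of_lt (by omega), tmQuasiGreedy_of_lt (by omega), add_assoc,
        hτ.two_pow_add (by omega)]
    · rw [show 2 ^ (m - 1) + (2 ^ (m - 1) - 1) = 2 ^ m - 1 by omega, tmQuasiGreedy_period_sub_one,
        tmQuasiGreedy_of_lt (by omega), Nat.sub_add_cancel hh, hτ.two_pow]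
  have hr : k % 2 ^ m < 2 ^ m := Nat.mod_lt _ (by omega)
  rw [tmQuasiGreedy_congr_mod (a := k) (Nat.mod_mod k _).symm,
    tmQuasiGreedy_congr_mod (a := 2 ^ (m - 1) + k) (b := 2 ^ (m - 1) + k % 2 ^ m)
      (Nat.add_mod_mod _ _ _).symm]
  generalize k % 2 ^ m = r at hr
  rcases lt_or_ge r (2 ^ (m - 1)) with hr' | hr'
  · exact hfirst r hr'
  · obtain ⟨s, rfl⟩ := Nat.exists_eq_add_of_le hr'
    rw [hfirst s (by omega), ← add_assoc, ← hp, add_comm, tmQuasiGreedy_add_period]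
    have := tmQuasiGreedy_le_one hτ (m := m) s
    omega

lemma tmQuasiGreedy_half_sub_one (hτ : IsThueMorse τ) (hm : 1 ≤ m) :
    tmQuasiGreedy τ m (2 ^ (m - 1) - 1) = 1 := by
  have hh := Nat.one_le_two_pow (n := m - 1)
  have hp : 2 ^ (m - 1) < 2 ^ m := Nat.pow_lt_pow_right one_lt_two (by omega)
  rw [tmQuasiGreedy_of_lt (by omega), Nat.sub_add_cancel hh, hτ.two_pow]

theorem seqVal_tmQuasiGreedy (hτ : IsThueMorse τ) {q : ℝ} (hq : 1 < q)
    (hsum : (1 : ℝ) = ∑ i ∈ range (2 ^ m), (τ (i + 1) : ℝ) / q ^ (i + 1)) :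
    seqVal q (tmQuasiGreedy τ m) = 1 := by
  have hg := tmQuasiGreedy_le_one hτ (m := m)
  have hval := seqVal_eq_sum_add hq hg (2 ^ m)
  have hper : shift (tmQuasiGreedy τ m) (2 ^ m) = tmQuasiGreedy τ m := by
    ext k; rw [shift, add_comm, tmQuasiGreedy_add_period]
  have hword : ∑ k ∈ range (2 ^ m), (tmQuasiGreedy τ m k : ℝ) / q ^ (k + 1)
      = 1 - 1 / q ^ 2 ^ m := by
    obtain ⟨r, hr⟩ : ∃ r, 2 ^ m = r + 1 := Nat.exists_eq_add_one.2 (Nat.two_pow_pos m)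
    have hlast : tmQuasiGreedy τ m r = 0 := by
      rw [show r = 2 ^ m - 1 by omega]; exact tmQuasiGreedy_period_sub_one
    have htop : τ (r + 1) = 1 := hr ▸ hτ.two_pow m
    rw [hr, sum_range_succ] at hsum ⊢
    simp only [hlast, htop, Nat.cast_zero, Nat.cast_one, zero_div, add_zero] at hsum ⊢
    rw [sum_congr rfl fun k hk => by rw [tmQuasiGreedy_of_lt (by simp at hk; omega)]]
    linarith
  rw [hper, hword] at hval
  have hpow : 1 < q ^ 2 ^ m := one_lt_pow₀ hq (by positivity)
  field_simp at hval
  nlinarith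

end QuasiGreedy

section Attainment

variable {τ : ℕ → ℕ} {m : ℕ} {q x : ℝ} {d : ℕ → ℕ}

/-- The reflected tail is forced to be `tmQuasiGreedy τ m`, whose second half-periods are the
reflections of the first ones. -/
theorem zero_and_tail_eq_one_of_reflect_tail_eq_one (hτ : IsThueMorse τ) (hm : 1 ≤ m)
    (hq1 : 1 < q) (hq2 : q < 2)
    (hsum : (1 : ℝ) = ∑ i ∈ range (2 ^ m), (τ (i + 1) : ℝ) / q ^ (i + 1))
    (hd : IsWeaklyAdmissible q d) {i : ℕ} (h1 : seqVal q (shift (reflectSeq d) (i + 1)) = 1) :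
    d (i + 2 ^ (m - 1)) = 0 ∧ seqVal q (shift d (i + 2 ^ (m - 1) + 1)) = 1 := by
  have hg := tmQuasiGreedy_le_one hτ (m := m)
  have hg1 := seqVal_tmQuasiGreedy hτ hq1 hsum
  have hreflect : reflectSeq (shift d (i + 1)) = tmQuasiGreedy τ m :=
    eq_of_isWeaklyAdmissible hq1 hq2 hg hg1
      (seqVal_shift_le_one_of_lexMax hq1 hg (Nat.two_pow_pos m) tmQuasiGreedy_add_period
        (tmQuasiGreedy_lexMax hτ hm) hg1.le)
      (tmQuasiGreedy_shift_pos hτ hm hq1) (hd.shift (i + 1)).reflectSeq h1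
  have hdg : ∀ k, d (i + 1 + k) = 1 - tmQuasiGreedy τ m k := fun k => by
    rw [← hreflect]; have := hd.1 (i + 1 + k); simp only [reflectSeq, shift]; omega
  have hh := Nat.one_le_two_pow (n := m - 1)
  constructor
  · rw [show i + 2 ^ (m - 1) = i + 1 + (2 ^ (m - 1) - 1) by omega, hdg,
      tmQuasiGreedy_half_sub_one hτ hm]
  · convert hg1 using 2
    ext k
    rw [shift, show i + 2 ^ (m - 1) + 1 + k = i + 1 + (2 ^ (m - 1) + k) by omega, hdg,
      tmQuasiGreedy_half_add hτ hm]
    have := hg k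
    omega

theorem mem_UBases_of_sInf_eq (hτ : IsThueMorse τ) (hm : 1 ≤ m) (hq1 : 1 < q) (hq2 : q < 2)
    (hsum : (1 : ℝ) = ∑ i ∈ range (2 ^ m), (τ (i + 1) : ℝ) / q ^ (i + 1))
    (h : sInf (UBases x) = q) : q ∈ UBases x := by
  have hbdd : BddBelow (UBases x) := ⟨1, fun p hp => hp.1.le⟩
  have hne : (UBases x).Nonempty := by
    by_contra hempty
    rw [Set.not_nonempty_iff_eq_empty.1 hempty, Real.sInf_empty] at h
    linarith
  obtain ⟨f, -, hf, hfU⟩ := exists_seq_tendsto_sInf hne hbdd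
  rw [h] at hf
  obtain ⟨d, hd, hdx, hzero⟩ := exists_isWeaklyAdmissible_of_tendsto hq1 hf
    (fun j => h ▸ csInf_le hbdd (hfU j)) hfU
  refine ⟨hq1, hq2, (hasUniqueExpansion_iff hq1 hq2.le).2 ⟨d, ⟨hd.1, fun i => ⟨hzero i, ?_⟩⟩, hdx⟩⟩
  intro hi
  refine lt_of_le_of_ne ((hd.2 i).2 hi) fun h1 => ?_
  obtain ⟨h0, htail⟩ := zero_and_tail_eq_one_of_reflect_tail_eq_one hτ hm hq1 hq2 hsum hd h1
  exact (hzero _ h0).ne htail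

end Attainment

lemma exists_mem_Icc_mem_Ioc {α : Type*} [LinearOrder α] {u : ℕ → α} {q : α} {N : ℕ}
    (h0 : u 0 < q) (hN : q ≤ u N) : ∃ k ∈ Finset.Icc 1 N, q ∈ Set.Ioc (u (k - 1)) (u k) := by
  classical
  have hex : ∃ k, q ≤ u k := ⟨N, hN⟩
  have hk0 : Nat.find hex ≠ 0 := fun h => (Nat.find_spec hex).not_gt (h ▸ h0)
  refine ⟨Nat.find hex, Finset.mem_Icc.2 ⟨Nat.one_le_iff_ne_zero.2 hk0, Nat.find_min' hex hN⟩,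
    not_le.1 (Nat.find_min hex (by omega)), Nat.find_spec hex⟩

/-- Lean's junk value `sInf ∅ = 0` lies outside `(a, b]` because `0 ≤ a`. -/
theorem sInf_mem_Ioc_iff {S : Set ℝ} {a b : ℝ} (hS : BddBelow S) (ha0 : 0 ≤ a)
    (ha : sInf S = a → a ∈ S) (hb : sInf S = b → b ∈ S) :
    sInf S ∈ Set.Ioc a b ↔ (∃ q ∈ S, q ∈ Set.Ioc a b) ∧ ∀ q ∈ S, a < q := by
  constructor
  · rintro ⟨haS, hSb⟩
    have hne : S.Nonempty := by
      by_contra hempty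
      rw [Set.not_nonempty_iff_eq_empty.1 hempty, Real.sInf_empty] at haS
      linarith
    refine ⟨?_, fun q hq => haS.trans_le (csInf_le hS hq)⟩
    rcases hSb.lt_or_eq with hlt | heq
    · obtain ⟨q, hq, hqb⟩ := exists_lt_of_csInf_lt hne hlt
      exact ⟨q, hq, haS.trans_le (csInf_le hS hq), hqb.le⟩
    · exact ⟨b, hb heq, heq ▸ haS, le_rfl⟩
  · rintro ⟨⟨q, hq, hqab⟩, hgt⟩
    have hle : a ≤ sInf S := le_csInf ⟨q, hq⟩ fun p hp => (hgt p hp).le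
    refine ⟨hle.lt_of_ne fun heq => (hgt a (ha heq.symm)).false, (csInf_le hS hq).trans hqab.2⟩

section BaseSeq

variable {τ : ℕ → ℕ} {Q : ℕ → ℝ} {x : ℝ}

lemma mem_Uset_iff {q : ℝ} (hq1 : 1 < q) (hq2 : q < 2) : x ∈ Uset q ↔ HasUniqueExpansion q x := by
  refine ⟨And.right, fun hu => ⟨?_, hu⟩⟩
  obtain ⟨d, hd, rfl⟩ := (hasUniqueExpansion_iff hq1 hq2.le).1 hu
  exact ⟨seqVal_nonneg (by linarith) d, seqVal_le hq1 hd.1⟩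

lemma mem_D_iff (hQ : IsBaseSeq τ Q) (k : ℕ) :
    x ∈ D Q k ↔ ∃ q ∈ UBases x, q ∈ Set.Ioc (Q (k - 1)) (Q k) := by
  simp only [D, Set.mem_iUnion, exists_prop]
  refine exists_congr fun q => ?_
  by_cases hq : q ∈ Set.Ioc (Q (k - 1)) (Q k)
  · have hq1 : 1 < q := (hQ.one_le _).trans_lt hq.1
    have hq2 : q < 2 := hq.2.trans_lt (hQ.lt_two k)
    simp only [hq, mem_Uset_iff hq1 hq2, UBases, Set.mem_ofPred_eq, hq1, hq2, true_and, and_true]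
  · simp only [hq, false_and, and_false]

lemma mem_iUnion_D_iff (hτ : IsThueMorse τ) (hQ : IsBaseSeq τ Q) (N : ℕ) :
    x ∈ ⋃ k ∈ Finset.Icc 1 N, D Q k ↔ ∃ q ∈ UBases x, q ≤ Q N := by
  simp only [Set.mem_iUnion, exists_prop, mem_D_iff hQ]
  constructor
  · rintro ⟨k, hk, q, hqU, hqI⟩
    exact ⟨q, hqU, hqI.2.trans ((hQ.strictMono hτ).monotone (Finset.mem_Icc.1 hk).2)⟩
  · rintro ⟨q, hqU, hqN⟩
    obtain ⟨k, hk, hqI⟩ := exists_mem_Icc_mem_Ioc (u := Q) (hQ.1 ▸ hqU.1) hqN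
    exact ⟨k, hk, q, hqU, hqI⟩

lemma mem_UBases_of_sInf_eq_of_isBaseSeq (hτ : IsThueMorse τ) (hQ : IsBaseSeq τ Q) (hx : 0 < x)
    (k : ℕ) (h : sInf (UBases x) = Q k) : Q k ∈ UBases x := by
  rcases k.eq_zero_or_pos with rfl | hk
  · exact absurd (h.trans hQ.1) (sInf_UBases_ne_one hx)
  · obtain ⟨hq1, hq2, hsum⟩ := hQ.2 k hk
    exact mem_UBases_of_sInf_eq hτ hk hq1 hq2 hsum h

end BaseSeq

end Univoque

theorem qs_mem_Ioc_iff_general (τ : ℕ → ℕ) (hτ : IsThueMorse τ)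
    (Q : ℕ → ℝ) (hQ : IsBaseSeq τ Q)
    (x : ℝ) (hx : 0 < x) (n : ℕ) :
    qs x ∈ Set.Ioc (Q (n - 1)) (Q n) ↔
      x ∈ D Q n \ ⋃ k ∈ Finset.Icc 1 (n - 1), D Q k := by
  have hbdd : BddBelow (UBases x) := ⟨1, fun q hq => hq.1.le⟩
  rw [qs, Univoque.sInf_mem_Ioc_iff hbdd (zero_le_one.trans (hQ.one_le _))
      (Univoque.mem_UBases_of_sInf_eq_of_isBaseSeq hτ hQ hx _)
      (Univoque.mem_UBases_of_sInf_eq_of_isBaseSeq hτ hQ hx _),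
    Set.mem_sdiff, Univoque.mem_D_iff hQ, Univoque.mem_iUnion_D_iff hτ hQ]
  simp only [not_exists, not_and, not_le]

/-- For `x > 0` and `n ≥ 1`, `q_s(x) ∈ (q_{n-1}, q_n]` iff
`x ∈ D_n \ ⋃_{k=1}^{n-1} D_k`. -/
theorem qs_mem_Ioc_iff (τ : ℕ → ℕ) (hτ : IsThueMorse τ)
    (Q : ℕ → ℝ) (hQ : IsBaseSeq τ Q)
    (x : ℝ) (hx : 0 < x) (n : ℕ) (hn : 1 ≤ n) :
    qs x ∈ Set.Ioc (Q (n - 1)) (Q n) ↔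
      x ∈ D Q n \ ⋃ k ∈ Finset.Icc 1 (n - 1), D Q k :=
  qs_mem_Ioc_iff_general τ hτ Q hQ x hx n
end
end
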